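/- Let G be a group, σ an automorphism of G, and suppose H¹ of the procyclic group σ^{ẑ} with coefficients in G is computed as the direct limit over d of H¹(Z/dZ, G^{σ^d}) where Z/dZ acts via σ. Then under the identification of H¹(σ^Z, G) with σ-conjugacy classes (via f ↦ f(σ)), a σ-conjugacy class [b] lies in the image of H¹(σ^{ẑ}, G) if and only if N^{(d)}(b) = 1 for some d ≥ 1 (for some, equivalently every, representative b of the class). -/
import Mathlib


/-- The twisted norm `N^{(d)}(b) = b · σ(b) · σ²(b) ⋯ σ^{d-1}(b)`. -/
def twistedNorm {G : Type*} [Group G] (σ : G → G) (d : ℕ) (b : G) : G :=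
  ((List.range d).map (fun i => σ^[i] b)).prod

section aux
variable {G : Type*} [Group G] (σ : G ≃* G)

lemma iter_mul (m : ℕ) (x y : G) : (⇑σ)^[m] (x * y) = (⇑σ)^[m] x * (⇑σ)^[m] y := by
  induction m with
  | zero => simp
  | succ n ih => simp [Function.iterate_succ_apply', ih, map_mul]

lemma iter_inv (m : ℕ) (x : G) : (⇑σ)^[m] x⁻¹ = ((⇑σ)^[m] x)⁻¹ := by
  induction m with
  | zero => simp
  | succ n ih => simp [Function.iterate_succ_apply', ih]

lemma iter_one (m : ℕ) : (⇑σ)^[m] (1 : G) = 1 := by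
  induction m with
  | zero => simp
  | succ n ih => simp [Function.iterate_succ_apply', ih]

lemma twistedNorm_succ (d : ℕ) (b : G) :
    twistedNorm (⇑σ) (d + 1) b = twistedNorm (⇑σ) d b * (⇑σ)^[d] b := by
  simp [twistedNorm, List.range_succ]

lemma twistedNorm_add (m n : ℕ) (b : G) :
    twistedNorm (⇑σ) (m + n) b = twistedNorm (⇑σ) m b * (⇑σ)^[m] (twistedNorm (⇑σ) n b) := by
  induction n with
  | zero => simp [twistedNorm, iter_one]
  | succ k ih =>
      rw [← Nat.add_assoc, twistedNorm_succ, ih, twistedNorm_succ, iter_mul, mul_assoc,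
        ← Function.iterate_add_apply]

lemma twistedNorm_conj (d : ℕ) (b g : G) :
    twistedNorm (⇑σ) d (g * b * (σ g)⁻¹) =
      g * twistedNorm (⇑σ) d b * ((⇑σ)^[d] g)⁻¹ := by
  induction d with
  | zero => simp [twistedNorm]
  | succ n ih =>
      rw [twistedNorm_succ, twistedNorm_succ, ih]
      have h1 : (⇑σ)^[n] (g * b * (σ g)⁻¹)
          = (⇑σ)^[n] g * (⇑σ)^[n] b * ((⇑σ)^[n + 1] g)⁻¹ := by
        rw [iter_mul, iter_mul, iter_inv]
        congr 2
      rw [h1]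
      group

lemma twistedNorm_mul_of_one (d k : ℕ) (b : G) (h : twistedNorm (⇑σ) d b = 1) :
    twistedNorm (⇑σ) (k * d) b = 1 := by
  induction k with
  | zero => simp [twistedNorm]
  | succ n ih =>
      rw [Nat.succ_mul, twistedNorm_add, ih, h, iter_one, one_mul]

lemma iter_fix_mul (e k : ℕ) (g : G) (h : (⇑σ)^[e] g = g) : (⇑σ)^[k * e] g = g := by
  induction k with
  | zero => simp
  | succ n ih => rw [Nat.succ_mul, Function.iterate_add_apply, h, ih]

end aux

/-- In the setting where every element of `G` is fixed by some power of `σ`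
(so that `H¹(σ^ẑ, G)` is the direct limit of the `H¹(ℤ/dℤ, G^{σ^d})`, a class of
`H¹(σ^ẑ, G)` being represented by a σ-conjugacy class with a representative `b'`
satisfying `σ^d(b') = b'` and `N^{(d)}(b') = 1`): the σ-conjugacy class of `b` lies in
the image of `H¹(σ^ẑ, G)` if and only if `N^{(d)}(b') = 1` for some `d ≥ 1` for some
(equivalently, every) representative `b'` of the class. -/
theorem stmt_10 {G : Type*} [Group G] (σ : G ≃* G)
    (hfix : ∀ g : G, ∃ e : ℕ, 1 ≤ e ∧ (⇑σ)^[e] g = g) (b : G) :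
    (∃ (b' g : G) (d : ℕ), 1 ≤ d ∧ b' = g * b * (σ g)⁻¹ ∧
        (⇑σ)^[d] b' = b' ∧ twistedNorm (⇑σ) d b' = 1) ↔
    (∀ b' g : G, b' = g * b * (σ g)⁻¹ →
        ∃ d : ℕ, 1 ≤ d ∧ twistedNorm (⇑σ) d b' = 1) := by
  constructor
  · rintro ⟨b₀, g₀, d, hd, hrep, _hfixb, hnorm⟩ b' g hb'
    obtain ⟨e, he, hfe⟩ := hfix (g * g₀⁻¹)
    refine ⟨e * d, Nat.one_le_iff_ne_zero.2 (by positivity), ?_⟩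
    have hb'' : b' = (g * g₀⁻¹) * b₀ * (σ (g * g₀⁻¹))⁻¹ := by
      rw [hb', hrep]; simp [map_mul]; group
    rw [hb'', twistedNorm_conj, twistedNorm_mul_of_one σ d e b₀ hnorm, mul_comm e d,
      iter_fix_mul σ e d _ hfe]
    group
  · intro H
    have hb : b = 1 * b * (σ 1)⁻¹ := by simp
    obtain ⟨d, hd, hnorm⟩ := H b 1 hb
    obtain ⟨e, he, hfe⟩ := hfix b
    refine ⟨b, 1, e * d, Nat.one_le_iff_ne_zero.2 (by positivity), hb, ?_, ?_⟩
    · rw [mul_comm]; exact iter_fix_mul σ e d b hfe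
    · exact twistedNorm_mul_of_one σ d e b hnorm
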